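/- arXiv:2412.04967 — 2 statements merged into one kernel-verified Lean document; each statement's English description precedes it below -/
import Mathlib

section
/- For any positive integers k, u with k ≤ n, the two expressions ∑_{i=1}^{u} (-1)^{i-1} (i-1)! · S(u,i) · C(n-i, k-i) and ∑_{j=1}^{k} (-1)^{j-1} j^{u-1} · C(n, k-j) are equal, where S(u,i) is the Stirling number of the second kind. -/
/-!
Write `j ^ (u - 1) = ∑ᵢ S(u, i) (i - 1)! C(j - 1, i - 1)` (the expansion of a power in falling
factorials, shifted by one) and exchange the two sums. For fixed `i` the remaining alternating sum
`∑ⱼ (-1) ^ (j - 1) C(j - 1, i - 1) C(n, k - j)` is the Chu–Vandermonde convolution of `C(n, ·)`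
with `C(-i, m) = (-1) ^ m C(i - 1 + m, m)`, hence equals `(-1) ^ (i - 1) C(n - i, k - i)`.
-/

/-- Stirling numbers of the second kind. -/
def stirling2 : ℕ → ℕ → ℕ
  | 0, 0 => 1
  | 0, _ + 1 => 0
  | _ + 1, 0 => 0
  | n + 1, k + 1 => (k + 1) * stirling2 n (k + 1) + stirling2 n k

open Finset Nat

theorem stirling2_eq_stirlingSecond : stirling2 = stirlingSecond := by
  funext n k
  induction n generalizing k with
  | zero => cases k <;> rfl
  | succ n ih => cases k <;> simp [stirling2, stirlingSecond_succ_succ, ih]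

theorem sum_Icc_one_eq_sum_range {M : Type*} [AddCommMonoid M] (f : ℕ → M) (n : ℕ) :
    ∑ i ∈ Icc 1 n, f i = ∑ i ∈ range n, f (i + 1) := by
  rw [← Ico_add_one_right_eq_Icc, sum_Ico_eq_sum_range, add_tsub_cancel_right]
  simp only [add_comm 1]

theorem Nat.add_one_pow_eq_sum_stirlingSecond_mul_factorial_mul_choose (v p : ℕ) :
    (p + 1) ^ v = ∑ i ∈ range (v + 1), stirlingSecond (v + 1) (i + 1) * i ! * p.choose i := by
  induction v with
  | zero => simp [stirlingSecond_self]
  | succ v ih =>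
    have hstep (i : ℕ) : (p + 1) * (stirlingSecond (v + 1) (i + 1) * i ! * p.choose i) =
        (i + 1) * stirlingSecond (v + 1) (i + 1) * i ! * p.choose i +
          stirlingSecond (v + 1) (i + 1) * (i + 1)! * p.choose (i + 1) := by
      have hpascal : (p + 1) * p.choose i = (p.choose i + p.choose (i + 1)) * (i + 1) := by
        rw [add_one_mul_choose_eq, choose_succ_succ]
      rw [factorial_succ]
      linear_combination stirlingSecond (v + 1) (i + 1) * i ! * hpascal
    rw [pow_succ', ih, mul_sum, sum_congr rfl fun i _ => hstep i, sum_add_distrib]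
    symm
    calc ∑ i ∈ range (v + 2), stirlingSecond (v + 2) (i + 1) * i ! * p.choose i
        = ∑ i ∈ range (v + 2), (i + 1) * stirlingSecond (v + 1) (i + 1) * i ! * p.choose i +
            ∑ i ∈ range (v + 2), stirlingSecond (v + 1) i * i ! * p.choose i := by
          rw [← sum_add_distrib]
          exact sum_congr rfl fun i _ => by rw [stirlingSecond_succ_succ]; ring
      _ = _ := by
          rw [sum_range_succ, sum_range_succ' _ (v + 1),
            stirlingSecond_eq_zero_of_lt (lt_add_one (v + 1)), stirlingSecond_succ_zero]
          simp only [mul_zero, zero_mul, add_zero]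

theorem sum_neg_one_pow_mul_add_choose_mul_choose (i K n : ℕ) :
    ∑ a ∈ range (K + 1), (-1 : ℤ) ^ a * (i + a).choose a * n.choose (K - a) =
      Ring.choose ((n : ℤ) - (i + 1)) K := by
  rw [sub_eq_neg_add, Ring.add_choose_eq K (Commute.all _ _),
    Nat.sum_antidiagonal_eq_sum_range_succ fun a b =>
      Ring.choose (-((i : ℤ) + 1)) a * Ring.choose (n : ℤ) b]
  refine sum_congr rfl fun a _ => ?_
  rw [Ring.choose_neg, Ring.choose_natCast,
    show (i : ℤ) + 1 + a - 1 = ((i + a : ℕ) : ℤ) by push_cast; ring, Ring.choose_natCast,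
    Units.smul_def, Int.coe_negOnePow_natCast, smul_eq_mul]

theorem sum_neg_one_pow_mul_choose_mul_choose {i K n : ℕ} (hKn : K < n) :
    ∑ j ∈ range (K + 1), (-1 : ℤ) ^ j * j.choose i * n.choose (K - j) =
      (-1) ^ i * if i ≤ K then ((n - (i + 1)).choose (K - i) : ℤ) else 0 := by
  split_ifs with hiK
  · obtain ⟨K, rfl⟩ := exists_add_of_le hiK
    have hlow : ∑ j ∈ range i, (-1 : ℤ) ^ j * j.choose i * n.choose (i + K - j) = 0 :=
      sum_eq_zero fun j hj => by rw [choose_eq_zero_of_lt (mem_range.1 hj)]; simp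
    rw [add_assoc, sum_range_add, hlow, zero_add, add_tsub_cancel_left, ← Ring.choose_natCast,
      Nat.cast_sub (by omega), Nat.cast_add_one, ← sum_neg_one_pow_mul_add_choose_mul_choose,
      mul_sum]
    refine sum_congr rfl fun a _ => ?_
    rw [choose_symm_add, pow_add, add_tsub_add_eq_tsub_left]
    ring
  · rw [mul_zero]
    exact sum_eq_zero fun j hj => by
      rw [choose_eq_zero_of_lt (by simp at hj; omega)]; simp

theorem stmt_3 (k u n : ℕ) (hk : 1 ≤ k) (hu : 1 ≤ u) (hkn : k ≤ n) :
    ∑ i ∈ Finset.Icc 1 u, (-1 : ℤ) ^ (i - 1) * (Nat.factorial (i - 1) : ℤ) *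
        (stirling2 u i : ℤ) * (if i ≤ k then (Nat.choose (n - i) (k - i) : ℤ) else 0)
      = ∑ j ∈ Finset.Icc 1 k, (-1 : ℤ) ^ (j - 1) * (j : ℤ) ^ (u - 1) *
        (Nat.choose n (k - j) : ℤ) := by
  obtain ⟨v, rfl⟩ : ∃ v, u = v + 1 := ⟨u - 1, by omega⟩
  obtain ⟨K, rfl⟩ : ∃ K, k = K + 1 := ⟨k - 1, by omega⟩
  have hpow (j : ℕ) : ((j + 1 : ℕ) : ℤ) ^ v =
      ∑ i ∈ range (v + 1), (stirlingSecond (v + 1) (i + 1) * i ! : ℤ) * j.choose i := by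
    exact_mod_cast add_one_pow_eq_sum_stirlingSecond_mul_factorial_mul_choose v j
  simp only [stirling2_eq_stirlingSecond, sum_Icc_one_eq_sum_range, add_tsub_cancel_right,
    hpow, add_le_add_iff_right, Nat.add_sub_add_right]
  simp_rw [mul_sum, sum_mul]
  rw [sum_comm]
  refine sum_congr rfl fun i _ => ?_
  calc _ = (stirlingSecond (v + 1) (i + 1) * i ! : ℤ) *
        ((-1) ^ i * if i ≤ K then ((n - (i + 1)).choose (K - i) : ℤ) else 0) := by ring
    _ = _ := by
      rw [← sum_neg_one_pow_mul_choose_mul_choose (by omega), mul_sum]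
      exact sum_congr rfl fun j _ => by ring
end

section
/- Fix k ≥ 2 and u ≥ 1. If n is a positive integer such that the Moser polynomial ∑_{j=1}^{k} (-1)^{j-1} j^{u-1} C(n, k-j) equals 0, then n divides (k−1)! · k^{u-1}. -/
/-! Multiply the Moser sum by `(k-1)!`. For `j < k` the term contains `C(n, i) * (k-1)!` with
`1 ≤ i = k - j ≤ k - 1`, which `n` divides because `i * C(n, i) = n * C(n-1, i-1)` and
`i ∣ (k-1)!`. Hence `n` also divides the remaining term `j = k`, namely `±(k-1)! * k^(u-1)`. -/

open Finset Nat

theorem Nat.dvd_choose_mul_self (n i : ℕ) : n ∣ n.choose i * i := by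
  rcases i with _ | i
  · exact dvd_zero _
  rcases n with _ | n
  · simp
  exact ⟨_, (add_one_mul_choose_eq n i).symm⟩

theorem Nat.dvd_choose_mul_factorial {n i m : ℕ} (hi : 1 ≤ i) (him : i ≤ m) :
    n ∣ n.choose i * m ! :=
  (dvd_choose_mul_self n i).trans (Nat.mul_dvd_mul_left _ (dvd_factorial hi him))

theorem Int.natCast_dvd_factorial_mul_sum_mul_choose (n m : ℕ) (c : ℕ → ℤ) :
    (n : ℤ) ∣ m ! * ∑ j ∈ Icc 1 m, c j * n.choose (m + 1 - j) := by
  rw [mul_sum]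
  refine dvd_sum fun j hj => ?_
  have hj : 1 ≤ j ∧ j ≤ m := mem_Icc.mp hj
  have hdvd : (n : ℤ) ∣ (n.choose (m + 1 - j) * m ! : ℕ) :=
    Int.natCast_dvd_natCast.mpr (dvd_choose_mul_factorial (by omega) (by omega))
  push_cast at hdvd
  exact (hdvd.mul_left (c j)).trans ⟨1, by ring⟩

theorem stmt_8_general (k u n : ℕ) (hk : 2 ≤ k)
    (h : ∑ j ∈ Finset.Icc 1 k, (-1 : ℤ) ^ (j - 1) * (j : ℤ) ^ (u - 1) *
        (Nat.choose n (k - j) : ℤ) = 0) :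
    n ∣ Nat.factorial (k - 1) * k ^ (u - 1) := by
  obtain ⟨m, rfl⟩ : ∃ m, k = m + 1 := ⟨k - 1, by omega⟩
  rw [sum_Icc_succ_top (by omega), Nat.sub_self, choose_zero_right] at h
  have hlower := Int.natCast_dvd_factorial_mul_sum_mul_choose n m
    fun j => (-1 : ℤ) ^ (j - 1) * (j : ℤ) ^ (u - 1)
  have htop : (n : ℤ) ∣ (-1) ^ m * (m ! * (m + 1 : ℤ) ^ (u - 1)) := by
    rw [eq_neg_of_add_eq_zero_left h] at hlower
    simpa [mul_left_comm, dvd_neg] using hlower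
  rw [(isUnit_neg_one.pow m).dvd_mul_left] at htop
  exact_mod_cast htop

theorem stmt_8 (k u n : ℕ) (hk : 2 ≤ k) (hu : 1 ≤ u) (hn : 1 ≤ n)
    (h : ∑ j ∈ Finset.Icc 1 k, (-1 : ℤ) ^ (j - 1) * (j : ℤ) ^ (u - 1) *
        (Nat.choose n (k - j) : ℤ) = 0) :
    n ∣ Nat.factorial (k - 1) * k ^ (u - 1) :=
  stmt_8_general k u n hk h
end
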